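/- Let f(t) = ∑_{n∈ℤ} a_n t^n be a Laurent polynomial with integer coefficients such that f(z) is a nonnegative real number for every z ∈ ℂ with |z| = 1, and such that a_0 = 1. Then f is the constant Laurent polynomial 1. -/

import Mathlib

/-!
Sample `f` at the `p`-th roots of unity `ζ^j` for a prime `p` larger than twice the degree of
`f`: the weights `w j = f(ζ^j) ≥ 0` have total mass `p = p·a₀` and their `n`-th discrete
Fourier sum equals `p·aₙ`. Hence `|aₙ| ≤ 1`, and if `aₙ = ±1` for some `n ≠ 0` then
`aₙ ζ^(-jn) = 1` wherever `w j ≠ 0`, which forces `j = 0`. So all the mass sits at `j = 0`,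
i.e. `f(1) = p`; this is absurd, since `p` can be any large prime.
-/

open LaurentPolynomial ComplexOrder

/-- The value of an integral Laurent polynomial `f = ∑ aₙ tⁿ` at a complex number
`z ≠ 0`. -/
noncomputable def evalCircle (f : LaurentPolynomial ℤ) (z : ℂ) : ℂ :=
  Finsupp.sum f.coeff fun n c => (c : ℂ) * z ^ n

/-- The coefficient `aₙ` of an integral Laurent polynomial `f = ∑ aₙ tⁿ`. -/
def coeffL (f : LaurentPolynomial ℤ) (n : ℤ) : ℤ := (f.coeff : ℤ →₀ ℤ) n

lemma IsPrimitiveRoot.sum_zpow_mul {K : Type*} [Field K] {ζ : K} {N : ℕ}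
    (hζ : IsPrimitiveRoot ζ N) (k : ℤ) :
    ∑ j ∈ Finset.range N, ζ ^ ((j : ℤ) * k) = if (N : ℤ) ∣ k then (N : K) else 0 := by
  simp_rw [mul_comm _ k, zpow_mul, zpow_natCast]
  split_ifs with hk
  · simp [(hζ.zpow_eq_one_iff_dvd k).mpr hk]
  · have hne : ζ ^ k - 1 ≠ 0 := sub_ne_zero.mpr fun h => hk ((hζ.zpow_eq_one_iff_dvd k).mp h)
    have hpow : (ζ ^ k) ^ N = 1 := by
      rw [← zpow_natCast, ← zpow_mul, mul_comm, zpow_mul, zpow_natCast, hζ.pow_eq_one,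
        one_zpow]
    exact (mul_eq_zero.mp (by rw [geom_sum_mul, hpow, sub_self])).resolve_right hne

lemma IsPrimitiveRoot.zpow_mul_ne_one {K : Type*} [Field K] {ζ : K} {p : ℕ}
    (hζ : IsPrimitiveRoot ζ p) (hp : p.Prime) {j m : ℤ} (hj0 : j ≠ 0) (hjp : |j| < p)
    (hm0 : m ≠ 0) (hmp : |m| < p) : ζ ^ (j * m) ≠ 1 := by
  rw [Ne, hζ.zpow_eq_one_iff_dvd]
  rintro hdvd
  rcases Int.Prime.dvd_mul' hp hdvd with h | h
  · exact hj0 (Int.eq_zero_of_abs_lt_dvd h hjp)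
  · exact hm0 (Int.eq_zero_of_abs_lt_dvd h hmp)

lemma norm_sum_mul_le_norm_sum {ι : Type*} {s : Finset ι} {w u : ι → ℂ}
    (hw : ∀ i ∈ s, 0 ≤ w i) (hu : ∀ i ∈ s, ‖u i‖ ≤ 1) :
    ‖∑ i ∈ s, w i * u i‖ ≤ ‖∑ i ∈ s, w i‖ := by
  calc ‖∑ i ∈ s, w i * u i‖ ≤ ∑ i ∈ s, ‖w i‖ * ‖u i‖ := by
        simpa only [norm_mul] using norm_sum_le s (fun i => w i * u i)
    _ ≤ ∑ i ∈ s, ‖w i‖ := Finset.sum_le_sum fun i hi =>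
        mul_le_of_le_one_right (norm_nonneg _) (hu i hi)
    _ = ‖∑ i ∈ s, w i‖ := by
        rw [← Complex.re_eq_norm.mpr (Finset.sum_nonneg hw), Complex.re_sum]
        exact Finset.sum_congr rfl fun i hi => (Complex.re_eq_norm.mpr (hw i hi)).symm

lemma eq_one_of_sum_mul_eq_sum {ι : Type*} {s : Finset ι} {w u : ι → ℂ}
    (hw : ∀ i ∈ s, 0 ≤ w i) (hu : ∀ i ∈ s, ‖u i‖ ≤ 1)
    (h : ∑ i ∈ s, w i * u i = ∑ i ∈ s, w i) {i : ι} (hi : i ∈ s) (hwi : w i ≠ 0) :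
    u i = 1 := by
  have hw' : ∀ i ∈ s, 0 ≤ (w i).re ∧ (w i).im = 0 := fun i hi => by
    simpa [eq_comm] using Complex.le_def.mp (hw i hi)
  have hterm : ∀ i ∈ s, 0 ≤ (w i).re * (1 - (u i).re) := fun i hi =>
    mul_nonneg (hw' i hi).1 (sub_nonneg.mpr ((Complex.re_le_norm _).trans (hu i hi)))
  have hsum : ∑ i ∈ s, (w i).re * (1 - (u i).re) = 0 := by
    have := congrArg Complex.re (sub_eq_zero.mpr h.symm)
    rw [← Finset.sum_sub_distrib, Complex.re_sum, Complex.zero_re] at this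
    rw [← this]
    refine Finset.sum_congr rfl fun i hi => ?_
    simp only [Complex.sub_re, Complex.mul_re, (hw' i hi).2]
    ring
  have hre : (u i).re = 1 := by
    have hwre : (w i).re ≠ 0 := fun h0 => hwi (Complex.ext h0 (hw' i hi).2)
    have := (Finset.sum_eq_zero_iff_of_nonneg hterm).mp hsum i hi
    have := (mul_eq_zero.mp this).resolve_left hwre
    linarith
  have hnorm : (u i).re = ‖u i‖ := le_antisymm (Complex.re_le_norm _) (hre ▸ hu i hi)
  rw [Complex.eq_coe_norm_of_nonneg (Complex.re_eq_norm.mp hnorm), ← hnorm, hre,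
    Complex.ofReal_one]

lemma sum_evalCircle_pow_mul_zpow {f : LaurentPolynomial ℤ} {ζ : ℂ} {N : ℕ}
    (hζ : IsPrimitiveRoot ζ N) (hf : ∀ m, coeffL f m ≠ 0 → 2 * |m| < N) {k : ℤ}
    (hk : 2 * |k| < N) :
    ∑ j ∈ Finset.range N, evalCircle f (ζ ^ j) * ζ ^ (-((j : ℤ) * k)) = N * coeffL f k := by
  have hζ0 : ζ ≠ 0 := hζ.ne_zero (by have := abs_nonneg k; omega)
  have hterm : ∀ j : ℕ, evalCircle f (ζ ^ j) * ζ ^ (-((j : ℤ) * k))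
      = ∑ m ∈ f.coeff.support, (coeffL f m : ℂ) * ζ ^ ((j : ℤ) * (m - k)) := fun j => by
    rw [evalCircle, Finsupp.sum, Finset.sum_mul]
    refine Finset.sum_congr rfl fun m _ => ?_
    rw [mul_assoc, ← zpow_natCast, ← zpow_mul, ← zpow_add₀ hζ0, mul_sub, sub_eq_add_neg]
    rfl
  have hinner : ∀ m ∈ f.coeff.support, ∑ j ∈ Finset.range N,
      (coeffL f m : ℂ) * ζ ^ ((j : ℤ) * (m - k)) =
        if m = k then (N : ℂ) * coeffL f k else 0 := by
    intro m hm
    rw [← Finset.mul_sum, hζ.sum_zpow_mul]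
    by_cases hmk : m = k
    · simp [hmk, mul_comm]
    · have hm' : 2 * |m| < N := hf m (Finsupp.mem_support_iff.mp hm)
      have : ¬ (N : ℤ) ∣ m - k := fun hd =>
        hmk (sub_eq_zero.mp (Int.eq_zero_of_abs_lt_dvd hd (by grind)))
      simp [hmk, this]
  simp_rw [hterm]
  rw [Finset.sum_comm, Finset.sum_congr rfl hinner, Finset.sum_ite_eq']
  split_ifs with hk
  · rfl
  · simp [coeffL, Finsupp.notMem_support_iff.mp hk]

theorem evalCircle_one_eq_of_prime {f : LaurentPolynomial ℤ}
    (hpos : ∀ z : ℂ, ‖z‖ = 1 → 0 ≤ evalCircle f z) (h0 : coeffL f 0 = 1)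
    {n : ℤ} (hn : n ≠ 0) (han : coeffL f n ≠ 0) {p : ℕ} (hp : p.Prime)
    (hf : ∀ m, coeffL f m ≠ 0 → 2 * |m| < p) : evalCircle f 1 = p := by
  obtain ⟨ζ, hζ⟩ : ∃ ζ : ℂ, IsPrimitiveRoot ζ p :=
    ⟨_, Complex.isPrimitiveRoot_exp p hp.ne_zero⟩
  set w : ℕ → ℂ := fun j => evalCircle f (ζ ^ j)
  have hw : ∀ j ∈ Finset.range p, 0 ≤ w j := fun j _ =>
    hpos _ (by rw [norm_pow, hζ.norm'_eq_one hp.ne_zero, one_pow])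
  have hnorm : ∀ k : ℤ, ‖ζ ^ k‖ = 1 := fun k => by
    rw [norm_zpow, hζ.norm'_eq_one hp.ne_zero, one_zpow]
  have hmass : ∑ j ∈ Finset.range p, w j = p := by
    simpa [h0] using sum_evalCircle_pow_mul_zpow hζ hf (k := 0) (by simpa using hp.pos)
  have hfourier := sum_evalCircle_pow_mul_zpow hζ hf (hf n han)
  set a := coeffL f n
  have ha : a = 1 ∨ a = -1 := by
    have hle := norm_sum_mul_le_norm_sum hw fun j _ => (hnorm (-((j : ℤ) * n))).le
    rw [hfourier, hmass, norm_mul, Complex.norm_intCast] at hle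
    have : |(a : ℝ)| ≤ 1 := le_of_mul_le_mul_left (by simpa using hle) (by simpa using hp.pos)
    have : |a| ≤ 1 := by exact_mod_cast this
    rw [abs_le] at this
    omega
  have ha2 : (a : ℂ) * a = 1 := by rcases ha with h | h <;> simp [h]
  have hanorm : ‖(a : ℂ)‖ = 1 := by rcases ha with h | h <;> simp [h]
  have hpeak : ∀ j ∈ Finset.range p, j ≠ 0 → w j = 0 := by
    intro j hj hj0
    by_contra hwj
    have hu : (a : ℂ) * ζ ^ (-((j : ℤ) * n)) = 1 := by
      refine eq_one_of_sum_mul_eq_sum (u := fun j : ℕ => a * ζ ^ (-((j : ℤ) * n))) hw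
        (fun j _ => by rw [norm_mul, hnorm, hanorm, mul_one]) ?_ hj hwj
      calc ∑ i ∈ Finset.range p, w i * (a * ζ ^ (-((i : ℤ) * n)))
          = a * ∑ i ∈ Finset.range p, w i * ζ ^ (-((i : ℤ) * n)) := by
            rw [Finset.mul_sum]; exact Finset.sum_congr rfl fun i _ => by ring
        _ = ∑ i ∈ Finset.range p, w i := by rw [hfourier, hmass, mul_left_comm, ha2, mul_one]
    apply hζ.zpow_mul_ne_one hp (j := j) (m := -2 * n) (by omega) (by simpa using hj) (by omega)
      (by rw [abs_mul]; simpa using hf n han)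
    calc ζ ^ ((j : ℤ) * (-2 * n)) = (a * ζ ^ (-((j : ℤ) * n))) ^ 2 := by
          rw [mul_pow, sq (a : ℂ), ha2, one_mul, ← zpow_natCast, ← zpow_mul]; ring_nf
      _ = 1 := by rw [hu, one_pow]
  rw [← hmass, Finset.sum_eq_single_of_mem 0 (by simpa using hp.pos) hpeak]
  simp [w]

theorem coeffL_eq_zero_of_ne_zero {f : LaurentPolynomial ℤ}
    (hpos : ∀ z : ℂ, ‖z‖ = 1 → 0 ≤ evalCircle f z) (h0 : coeffL f 0 = 1)
    {n : ℤ} (hn : n ≠ 0) : coeffL f n = 0 := by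
  by_contra han
  set D := f.coeff.support.sup Int.natAbs
  have hD : ∀ m, coeffL f m ≠ 0 → m.natAbs ≤ D := fun m hm =>
    Finset.le_sup (f := Int.natAbs) (Finsupp.mem_support_iff.mpr hm)
  have hbound : ∀ r, 2 * D + 1 ≤ r → ∀ m, coeffL f m ≠ 0 → 2 * |m| < r := by
    intro r hr m hm
    have := hD m hm
    rw [Int.abs_eq_natAbs]
    omega
  obtain ⟨p, hpD, hp⟩ := Nat.exists_infinite_primes (2 * D + 1)
  obtain ⟨q, hqp, hq⟩ := Nat.exists_infinite_primes (p + 1)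
  have hpq : (p : ℂ) = q := by
    rw [← evalCircle_one_eq_of_prime hpos h0 hn han hp (hbound p hpD),
      ← evalCircle_one_eq_of_prime hpos h0 hn han hq (hbound q (by omega))]
  exact absurd (Nat.cast_injective hpq) (by omega)

/-- Proposition 5.6: an integral Laurent polynomial which takes nonnegative real values
on the unit circle and has constant coefficient `1` is the constant `1` (i.e. the
circle group has no S-character other than `1`). -/
theorem stmt_12 (f : LaurentPolynomial ℤ)
    (hpos : ∀ z : ℂ, ‖z‖ = 1 → 0 ≤ evalCircle f z)
    (h0 : coeffL f 0 = 1) :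
    f = 1 := by
  ext m
  rw [AddMonoidAlgebra.one_def, AddMonoidAlgebra.coeff_single, Finsupp.single_apply]
  split_ifs with hm
  · exact hm ▸ h0
  · exact coeffL_eq_zero_of_ne_zero hpos h0 (Ne.symm hm)
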